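/- arXiv:1311.3239 — 2 statements merged into one kernel-verified Lean document; each statement's English description precedes it below -/
import Mathlib

section
/- For all natural numbers m ≥ n, the Chebyshev polynomials of the second kind satisfy the linearization formula U_m(x)·U_n(x) = Σ_{k=0}^{n} U_{m-n+2k}(x). -/
open Polynomial Chebyshev Finset

/-! Both sides of `U_m U_{n+1} = U_{m+1} U_n + U_{m-n-1}` satisfy the Chebyshev recurrence in `n`
and agree at `n = 0, 1`, so the identity holds for all integers `m`, `n`. It peels the summand
`U_{m-n-1}` off `U_m U_{n+1}`, leaving `U_{m+1} U_n`, so induction on `n` gives the linearization. -/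

namespace Polynomial.Chebyshev

variable (R : Type*) [CommRing R]

theorem U_mul_U_add_one (m n : ℤ) :
    U R m * U R (n + 1) = U R (m + 1) * U R n + U R (m - n - 1) := by
  induction n using Chebyshev.induct generalizing m with
  | zero =>
    linear_combination (norm := ring_nf) U R m * U_one R - U R (m + 1) * U_zero R - U_add_one R m
  | one =>
    linear_combination (norm := ring_nf) U R m * U_two R - U R (m + 1) * U_one R -
      2 * X * U_add_one R m - U_sub_two R m
  | add_two n ih₁ ih₀ =>
    linear_combination (norm := ring_nf) 2 * X * ih₁ m - ih₀ m + U R m * U_add_one R (n + 2) -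
      U R (m + 1) * U_add_two R n - U_sub_one R (m - n - 2)
  | neg_add_one n ih₀ ih₁ =>
    linear_combination (norm := ring_nf) 2 * X * ih₀ m - ih₁ m + U R m * U_sub_one R (-n + 1) -
      U R (m + 1) * U_sub_one R (-n) - U_add_one R (m + n - 1)

theorem U_mul_U_natCast (m : ℤ) (n : ℕ) :
    U R m * U R n = ∑ k ∈ range (n + 1), U R (m - n + 2 * k) := by
  induction n generalizing m with
  | zero => simp
  | succ n ih =>
    rw [sum_range_succ', Nat.cast_succ, U_mul_U_add_one, ih]
    push_cast
    congr 1
    · exact sum_congr rfl fun k _ ↦ congr_arg (U R) (by ring)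
    · congr 1; ring

end Polynomial.Chebyshev

theorem chebyshev_U_linearization_general (R : Type*) [CommRing R] (m n : ℕ) :
    Polynomial.Chebyshev.U R m * Polynomial.Chebyshev.U R n =
      ∑ k ∈ Finset.range (n + 1), Polynomial.Chebyshev.U R ((m : ℤ) - n + 2 * k) :=
  U_mul_U_natCast R m n

/-- Linearization formula for Chebyshev polynomials of the second kind:
for `m ≥ n`, `U_m * U_n = ∑_{k=0}^{n} U_{m-n+2k}`. -/
theorem chebyshev_U_linearization (R : Type*) [CommRing R] (m n : ℕ) (h : n ≤ m) :
    Polynomial.Chebyshev.U R m * Polynomial.Chebyshev.U R n =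
      ∑ k ∈ Finset.range (n + 1), Polynomial.Chebyshev.U R ((m : ℤ) - n + 2 * k) :=
  chebyshev_U_linearization_general R m n
end

section
/- The Mehler/Hille kernel formula for Hermite polynomials: for |s| < 1 and all real u, v, Σ_{n=0}^∞ H_n(u)·H_n(v)·s^n/(2^n·n!) = (1−s²)^{−1/2}·exp( (2uvs − (u²+v²)s²) / (1−s²) ), where H_n are the physicists' Hermite polynomials. -/
/-!
Differentiating the Fourier representation `√π e^{-x²} = ∫ e^{-t² + 2itx} dt` under the
integral gives `√π (d/dx)^n e^{-x²} = ∫ (2it)^n e^{-t² + 2itx} dt`, so `π H_n(u) H_n(v)` is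
`e^{u² + v²}` times a double integral of `((2it)(2ir))^n = (-4tr)^n` against
`e^{-t² + 2itu} e^{-r² + 2irv}`. Summing the series under the integral turns the powers into
`e^{-2str}`; this is legitimate because the absolute series is dominated by
`e^{2|s||t||r| - t² - r²}`, integrable for `|s| < 1`. What remains is the Gaussian integral of
`exp(-t² - 2str - r² + 2i(tu + rv))`, computed by completing the square in `r` and then in `t`.
-/

open Real

/-- The physicists' Hermite polynomials `H_n(x) = (-1)^n e^{x²} (d/dx)^n e^{-x²}`. -/
noncomputable def physHermite (n : ℕ) (x : ℝ) : ℝ :=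
  (-1 : ℝ) ^ n * Real.exp (x ^ 2) * iteratedDeriv n (fun y => Real.exp (-(y ^ 2))) x

open MeasureTheory
open Complex (I)
open scoped Complex Nat

lemma integrable_pow_mul_exp_neg_mul_sq {b : ℝ} (hb : 0 < b) (n : ℕ) :
    Integrable fun x : ℝ => x ^ n * Real.exp (-b * x ^ 2) := by
  simpa using
    integrable_rpow_mul_exp_neg_mul_sq hb (s := n) (by linarith [n.cast_nonneg (α := ℝ)])

lemma integral_cexp_quadratic_of_pos {b : ℝ} (hb : 0 < b) (c d : ℂ) :
    ∫ x : ℝ, cexp (-b * x ^ 2 + c * x + d) = √(π / b) * cexp (d + c ^ 2 / (4 * b)) := by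
  have hb' : ((-b : ℝ) : ℂ).re < 0 := by simpa using hb
  have h := integral_cexp_quadratic hb' c d
  push_cast at h
  rw [h, neg_neg, ← Complex.ofReal_div, Real.sqrt_eq_rpow, Complex.ofReal_cpow (by positivity)]
  push_cast
  ring_nf

section GaussianDerivIntegral

noncomputable def gaussianDerivIntegral (n : ℕ) (x : ℝ) : ℂ :=
  ∫ t : ℝ, (2 * I * t) ^ n * cexp (-t ^ 2 + 2 * I * t * x)

lemma norm_gaussianDerivIntegral_integrand (n : ℕ) (t x : ℝ) :
    ‖(2 * I * t) ^ n * cexp (-t ^ 2 + 2 * I * t * x)‖ =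
      2 ^ n * ‖t ^ n * Real.exp (-1 * t ^ 2)‖ := by
  simp [Complex.norm_exp, mul_pow, ← Complex.ofReal_pow]
  ring

lemma integrable_gaussianDerivIntegral_integrand (n : ℕ) (x : ℝ) :
    Integrable fun t : ℝ => (2 * I * t) ^ n * cexp (-t ^ 2 + 2 * I * t * x) :=
  ((integrable_pow_mul_exp_neg_mul_sq one_pos n).norm.const_mul _).mono' (by fun_prop)
    (.of_forall fun t => (norm_gaussianDerivIntegral_integrand n t x).le)

lemma hasDerivAt_gaussianDerivIntegral (n : ℕ) (x : ℝ) :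
    HasDerivAt (gaussianDerivIntegral n) (gaussianDerivIntegral (n + 1) x) x := by
  have hderiv (t y : ℝ) :
      HasDerivAt (fun y : ℝ => (2 * I * t) ^ n * cexp (-t ^ 2 + 2 * I * t * y))
        ((2 * I * t) ^ (n + 1) * cexp (-t ^ 2 + 2 * I * t * y)) y := by
    have hlin : HasDerivAt (fun z : ℂ => -(t : ℂ) ^ 2 + 2 * I * t * z) (2 * I * t) y := by
      simpa using ((hasDerivAt_id (y : ℂ)).const_mul (2 * I * t)).const_add (-(t : ℂ) ^ 2)
    exact ((hlin.cexp.const_mul ((2 * I * t) ^ n)).congr_deriv (by ring)).comp_ofReal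
  exact (hasDerivAt_integral_of_dominated_loc_of_deriv_le (x₀ := x)
    (Metric.ball_mem_nhds x one_pos)
    (.of_forall fun y => (integrable_gaussianDerivIntegral_integrand n y).aestronglyMeasurable)
    (integrable_gaussianDerivIntegral_integrand n x)
    (integrable_gaussianDerivIntegral_integrand (n + 1) x).aestronglyMeasurable
    (.of_forall fun t y _ => (norm_gaussianDerivIntegral_integrand (n + 1) t y).le)
    ((integrable_pow_mul_exp_neg_mul_sq one_pos (n + 1)).norm.const_mul _)
    (.of_forall fun t y _ => hderiv t y)).2

lemma gaussianDerivIntegral_zero (x : ℝ) :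
    gaussianDerivIntegral 0 x = √π * cexp (-x ^ 2) := by
  have h := integral_cexp_quadratic_of_pos one_pos (2 * I * x) 0
  simp only [Complex.ofReal_one, div_one] at h
  rw [gaussianDerivIntegral]
  convert h using 3 with t
  · ring_nf
  · ring_nf
    simp [Complex.I_sq]

lemma gaussianDerivIntegral_eq_sqrt_pi_mul_iteratedDeriv (n : ℕ) (x : ℝ) :
    gaussianDerivIntegral n x =
      √π * ((iteratedDeriv n (fun y => Real.exp (-(y ^ 2))) x : ℝ) : ℂ) := by
  induction n generalizing x with
  | zero => simp [gaussianDerivIntegral_zero]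
  | succ n ih =>
    have hdiff : Differentiable ℝ (iteratedDeriv n (fun y => Real.exp (-(y ^ 2)))) :=
      ContDiff.differentiable_iteratedDeriv' n (by fun_prop)
    rw [← (hasDerivAt_gaussianDerivIntegral n x).deriv, funext ih, iteratedDeriv_succ,
      deriv_const_mul_field']
    exact congrArg _ (hdiff x).hasDerivAt.ofReal_comp.deriv

lemma cexp_sq_mul_gaussianDerivIntegral (n : ℕ) (x : ℝ) :
    cexp (x ^ 2) * gaussianDerivIntegral n x = (-1) ^ n * √π * physHermite n x := by
  have hsign : ((-1 : ℂ) ^ n) * (-1) ^ n = 1 := by rw [← mul_pow]; simp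
  rw [gaussianDerivIntegral_eq_sqrt_pi_mul_iteratedDeriv, physHermite]
  push_cast
  linear_combination (-√π * cexp (x ^ 2) *
    ((iteratedDeriv n (fun y => Real.exp (-(y ^ 2))) x : ℝ) : ℂ)) * hsign

end GaussianDerivIntegral

section MehlerSeries

variable (s u v : ℝ)

noncomputable def mehlerTerm (n : ℕ) (p : ℝ × ℝ) : ℂ :=
  (-2 * s * p.1 * p.2 : ℂ) ^ n / n ! *
    (cexp (-p.1 ^ 2 + 2 * I * p.1 * u) * cexp (-p.2 ^ 2 + 2 * I * p.2 * v))

noncomputable def mehlerIntegrand (p : ℝ × ℝ) : ℂ :=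
  cexp (-2 * s * p.1 * p.2) *
    (cexp (-p.1 ^ 2 + 2 * I * p.1 * u) * cexp (-p.2 ^ 2 + 2 * I * p.2 * v))

lemma integral_mehlerTerm (n : ℕ) :
    ∫ p : ℝ × ℝ, mehlerTerm s u v n p =
      (s / 2) ^ n / n ! * (gaussianDerivIntegral n u * gaussianDerivIntegral n v) := by
  have hsplit (p : ℝ × ℝ) : mehlerTerm s u v n p = (s / 2 : ℂ) ^ n / n ! *
      ((2 * I * p.1) ^ n * cexp (-p.1 ^ 2 + 2 * I * p.1 * u) *
        ((2 * I * p.2) ^ n * cexp (-p.2 ^ 2 + 2 * I * p.2 * v))) := by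
    rw [mehlerTerm, show (-2 * s * p.1 * p.2 : ℂ) = s / 2 * (2 * I * p.1) * (2 * I * p.2) by
      linear_combination (-2 * s * p.1 * p.2 : ℂ) * Complex.I_sq, mul_pow, mul_pow]
    ring
  simp_rw [hsplit]
  rw [integral_const_mul]
  exact congrArg _ <| integral_prod_mul (μ := volume) (ν := volume)
    (fun t : ℝ => (2 * I * t) ^ n * cexp (-t ^ 2 + 2 * I * t * u))
    (fun t : ℝ => (2 * I * t) ^ n * cexp (-t ^ 2 + 2 * I * t * v))

lemma ofReal_physHermite_mul_physHermite_term (n : ℕ) :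
    ((physHermite n u * physHermite n v * s ^ n / (2 ^ n * n !) : ℝ) : ℂ) =
      (Real.exp (u ^ 2 + v ^ 2) / π : ℝ) * ∫ p : ℝ × ℝ, mehlerTerm s u v n p := by
  have hπ : (√π : ℂ) ^ 2 = π := by exact_mod_cast Real.sq_sqrt pi_pos.le
  have hsign : ((-1 : ℂ) ^ n) ^ 2 = 1 := by rw [← pow_mul, mul_comm, pow_mul]; simp
  rw [integral_mehlerTerm]
  push_cast
  rw [Complex.exp_add, show cexp (u ^ 2) * cexp (v ^ 2) / π * ((s / 2) ^ n / n ! *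
      (gaussianDerivIntegral n u * gaussianDerivIntegral n v)) = (s / 2) ^ n / n ! / π *
      ((cexp (u ^ 2) * gaussianDerivIntegral n u) * (cexp (v ^ 2) * gaussianDerivIntegral n v)) by
    ring, cexp_sq_mul_gaussianDerivIntegral, cexp_sq_mul_gaussianDerivIntegral]
  field_simp
  rw [hsign, hπ, div_pow]
  field_simp

lemma norm_mehlerTerm (n : ℕ) (p : ℝ × ℝ) :
    ‖mehlerTerm s u v n p‖ =
      (2 * |s| * |p.1| * |p.2|) ^ n / n ! * (Real.exp (-p.1 ^ 2) * Real.exp (-p.2 ^ 2)) := by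
  simp [mehlerTerm, Complex.norm_exp, ← Complex.ofReal_pow]

lemma hasSum_mehlerTerm (p : ℝ × ℝ) :
    HasSum (fun n => mehlerTerm s u v n p) (mehlerIntegrand s u v p) := by
  have h := NormedSpace.expSeries_div_hasSum_exp (-2 * s * p.1 * p.2 : ℂ)
  rw [← Complex.exp_eq_exp_ℂ] at h
  exact h.mul_right _

lemma hasSum_norm_mehlerTerm (p : ℝ × ℝ) :
    HasSum (fun n => ‖mehlerTerm s u v n p‖)
      (Real.exp (2 * |s| * |p.1| * |p.2|) * (Real.exp (-p.1 ^ 2) * Real.exp (-p.2 ^ 2))) := by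
  simp_rw [norm_mehlerTerm, Real.exp_eq_exp_ℝ]
  exact (NormedSpace.expSeries_div_hasSum_exp (2 * |s| * |p.1| * |p.2|)).mul_right _

variable {s}

lemma integrable_exp_abs_mul_abs_mul_gaussian (hs : |s| < 1) :
    Integrable fun p : ℝ × ℝ =>
      Real.exp (2 * |s| * |p.1| * |p.2|) * (Real.exp (-p.1 ^ 2) * Real.exp (-p.2 ^ 2)) := by
  have hpos : 0 < 1 - |s| := by linarith
  refine ((integrable_exp_neg_mul_sq hpos).mul_prod (integrable_exp_neg_mul_sq hpos)).mono'
    (by fun_prop) (.of_forall fun p => ?_)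
  rw [Real.norm_of_nonneg (by positivity), ← Real.exp_add, ← Real.exp_add, ← Real.exp_add]
  refine Real.exp_le_exp.2 ?_
  have hamgm : 2 * |p.1| * |p.2| ≤ p.1 ^ 2 + p.2 ^ 2 := by
    nlinarith [sq_nonneg (|p.1| - |p.2|), sq_abs p.1, sq_abs p.2]
  nlinarith [abs_nonneg s]

lemma hasSum_integral_mehlerTerm (hs : |s| < 1) :
    HasSum (fun n => ∫ p : ℝ × ℝ, mehlerTerm s u v n p)
      (∫ p : ℝ × ℝ, mehlerIntegrand s u v p) := by
  refine hasSum_integral_of_dominated_convergence (fun n p => ‖mehlerTerm s u v n p‖)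
    (fun n => by unfold mehlerTerm; fun_prop) (fun n => .of_forall fun p => le_rfl)
    (.of_forall fun p => (hasSum_norm_mehlerTerm s u v p).summable) ?_
    (.of_forall fun p => hasSum_mehlerTerm s u v p)
  simp_rw [fun p => (hasSum_norm_mehlerTerm s u v p).tsum_eq]
  exact integrable_exp_abs_mul_abs_mul_gaussian hs

lemma integral_mehlerIntegrand (hs : |s| < 1) :
    ∫ p : ℝ × ℝ, mehlerIntegrand s u v p =
      ((π / √(1 - s ^ 2) * Real.exp (-(u ^ 2 - 2 * s * u * v + v ^ 2) / (1 - s ^ 2)) : ℝ) :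
        ℂ) := by
  have hs2 : 0 < 1 - s ^ 2 := sub_pos.2 ((sq_lt_one_iff_abs_lt_one s).2 hs)
  have hint : Integrable (mehlerIntegrand s u v) := by
    refine (integrable_exp_abs_mul_abs_mul_gaussian hs).mono' (by unfold mehlerIntegrand; fun_prop)
      (.of_forall fun p => ?_)
    simp only [mehlerIntegrand, norm_mul, Complex.norm_exp]
    gcongr
    · simpa [abs_mul] using neg_le_abs (2 * s * p.1 * p.2)
    all_goals simp [← Complex.ofReal_pow]
  have hinner (t : ℝ) : ∫ r : ℝ, mehlerIntegrand s u v (t, r) =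
      √π * cexp (-((1 - s ^ 2 : ℝ) : ℂ) * t ^ 2 + 2 * I * (u - s * v) * t + -v ^ 2) := by
    have h :=
      integral_cexp_quadratic_of_pos one_pos (2 * I * v - 2 * s * t) (-t ^ 2 + 2 * I * t * u)
    simp only [Complex.ofReal_one, div_one] at h
    simp_rw [mehlerIntegrand, ← Complex.exp_add]
    convert h using 3 with r
    · ring_nf
    · push_cast
      linear_combination (-(v : ℂ) ^ 2) * Complex.I_sq
  rw [Measure.volume_eq_prod, integral_prod _ hint]
  simp_rw [hinner]
  rw [integral_const_mul, integral_cexp_quadratic_of_pos hs2]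
  have hsqrt : √π * √(π / (1 - s ^ 2)) = π / √(1 - s ^ 2) := by
    rw [Real.sqrt_div pi_pos.le, ← mul_div_assoc, Real.mul_self_sqrt pi_pos.le]
  have hexponent : -(v : ℂ) ^ 2 + (2 * I * (u - s * v)) ^ 2 / (4 * ((1 - s ^ 2 : ℝ) : ℂ)) =
      ((-(u ^ 2 - 2 * s * u * v + v ^ 2) / (1 - s ^ 2) : ℝ) : ℂ) := by
    have : (1 : ℂ) - s ^ 2 ≠ 0 := by exact_mod_cast hs2.ne'
    push_cast
    field_simp
    linear_combination (4 * ((u : ℂ) - s * v) ^ 2) * Complex.I_sq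
  rw [hexponent, ← Complex.ofReal_exp, ← mul_assoc, ← Complex.ofReal_mul, hsqrt,
    ← Complex.ofReal_mul]

end MehlerSeries

/-- The Mehler/Hille kernel formula: for `|s| < 1` and all real `u, v`,
`∑_{n} H_n(u) H_n(v) s^n / (2^n n!) = (1-s²)^{-1/2} exp((2uvs - (u²+v²)s²)/(1-s²))`. -/
theorem mehler_formula (s u v : ℝ) (hs : |s| < 1) :
    ∑' n : ℕ, physHermite n u * physHermite n v * s ^ n / (2 ^ n * n.factorial) =
      (1 / Real.sqrt (1 - s ^ 2)) *
        Real.exp ((2 * u * v * s - (u ^ 2 + v ^ 2) * s ^ 2) / (1 - s ^ 2)) := by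
  have hsum :=
    (hasSum_integral_mehlerTerm u v hs).mul_left ((Real.exp (u ^ 2 + v ^ 2) / π : ℝ) : ℂ)
  simp_rw [← ofReal_physHermite_mul_physHermite_term, integral_mehlerIntegrand u v hs,
    ← Complex.ofReal_mul, Complex.hasSum_ofReal] at hsum
  have hs2 : 0 < 1 - s ^ 2 := sub_pos.2 ((sq_lt_one_iff_abs_lt_one s).2 hs)
  have hexponent : u ^ 2 + v ^ 2 + -(u ^ 2 - 2 * s * u * v + v ^ 2) / (1 - s ^ 2) =
      (2 * u * v * s - (u ^ 2 + v ^ 2) * s ^ 2) / (1 - s ^ 2) := by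
    field_simp
    ring
  calc _ = Real.exp (u ^ 2 + v ^ 2) / π *
        (π / √(1 - s ^ 2) * Real.exp (-(u ^ 2 - 2 * s * u * v + v ^ 2) / (1 - s ^ 2))) :=
      hsum.tsum_eq
    _ = _ := by
      rw [← hexponent, Real.exp_add (u ^ 2 + v ^ 2)]
      field_simp
end
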